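/- arXiv:1406.1000 — 2 statements merged into one kernel-verified Lean document; each statement's English description precedes it below -/
import Mathlib

section
/- Let D be a nonempty type, n ≥ 1, and r_1, …, r_n : D → ℝ. Suppose that for each i ∈ {1,…,n} the element d_i ∈ D minimizes the partial-sum risk, i.e. ∑_{j=1}^{i} r_j(d_i) ≤ ∑_{j=1}^{i} r_j(d) for all d ∈ D. Then ∑_{i=1}^{n} r_i(d_i) ≤ ∑_{i=1}^{n} r_i(d_n). (In words: applying at each stage i the rule that is optimal for the first i components has total risk no larger than applying the rule optimal for all n components throughout; this is the content of Samuel's lemma comparing sequential and retrospective compound risks.) -/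
/-!
Induct on `n`. Adding `r (n + 1) (d (n + 1))` to the inductive bound for `n` leaves the sum of the
first `n` risks at `d n`, which by minimality of `d n` is at most the same sum at `d (n + 1)`.
-/

open Finset

theorem sum_Icc_le_sum_Icc_of_minimizes_prefix_sums {D M : Type*} [AddCommMonoid M]
    [PartialOrder M] [IsOrderedAddMonoid M] (r : ℕ → D → M) (d : ℕ → D) (a n : ℕ)
    (hmin : ∀ i ∈ Ico a n, ∀ x : D, ∑ j ∈ Icc a i, r j (d i) ≤ ∑ j ∈ Icc a i, r j x) :
    ∑ i ∈ Icc a n, r i (d i) ≤ ∑ i ∈ Icc a n, r i (d n) := by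
  rcases lt_or_ge n a with hna | han
  · simp [Icc_eq_empty_of_lt hna]
  induction n, han using Nat.le_induction with
  | base => simp
  | succ m ham ih =>
    have hstage : ∑ j ∈ Icc a m, r j (d m) ≤ ∑ j ∈ Icc a m, r j (d (m + 1)) :=
      hmin m (by simp [ham]) (d (m + 1))
    have hprev : ∑ i ∈ Icc a m, r i (d i) ≤ ∑ i ∈ Icc a m, r i (d m) :=
      ih (fun i hi => hmin i (Ico_subset_Ico_right m.le_succ hi))
    rw [sum_Icc_succ_top (by omega), sum_Icc_succ_top (by omega)]
    exact add_le_add_left (hprev.trans hstage) _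

theorem samuel_lemma_general {D : Type*} (n : ℕ)
    (r : ℕ → D → ℝ) (d : ℕ → D)
    (hmin : ∀ i ∈ Finset.Icc 1 n, ∀ d' : D,
      ∑ j ∈ Finset.Icc 1 i, r j (d i) ≤ ∑ j ∈ Finset.Icc 1 i, r j d') :
    ∑ i ∈ Finset.Icc 1 n, r i (d i) ≤ ∑ i ∈ Finset.Icc 1 n, r i (d n) :=
  sum_Icc_le_sum_Icc_of_minimizes_prefix_sums r d 1 n fun i hi => hmin i (Ico_subset_Icc_self hi)

/-- Samuel's lemma (abstract form): if at each stage `i` the decision `d i` minimizes the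
aggregate risk over the first `i` components, then the total risk of the sequential procedure
`i ↦ d i` is no larger than the total risk of using the retrospective rule `d n` throughout. -/
theorem samuel_lemma {D : Type*} [Nonempty D] (n : ℕ) (hn : 1 ≤ n)
    (r : ℕ → D → ℝ) (d : ℕ → D)
    (hmin : ∀ i ∈ Finset.Icc 1 n, ∀ d' : D,
      ∑ j ∈ Finset.Icc 1 i, r j (d i) ≤ ∑ j ∈ Finset.Icc 1 i, r j d') :
    ∑ i ∈ Finset.Icc 1 n, r i (d i) ≤ ∑ i ∈ Finset.Icc 1 n, r i (d n) :=
  samuel_lemma_general n r d hmin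
end

section
/- Let K(x) = 2/(e^x + e^{−x})², let n ≥ 1, σ > 0, and Z_1, …, Z_n ∈ ℝ. Define f̂(z) = (1/(nσ)) ∑_{j=1}^{n} K((z − Z_j)/σ) and ĝ(z) = (1/(nσ²)) ∑_{j=1}^{n} K′((z − Z_j)/σ), where K′ is the derivative of K. Then f̂(z) > 0 for all z, f̂ is differentiable with f̂′ = ĝ, and sup_{z ∈ ℝ} |ĝ(z)/f̂(z)| < 2/σ. Consequently the estimator δ̂(z) = z + ĝ(z)/f̂(z) satisfies |δ̂(z) − z| < 2/σ for all z ∈ ℝ. -/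
open Real Finset

/-!
Writing `eˣ + e⁻ˣ = 2 cosh x`, the logistic kernel is `K = 1 / (2 cosh²)`, so `K' = -2 tanh · K`
and `|K'| < 2K` because `|tanh| < 1`. Summing over the sample gives `|∑ K'(xⱼ)| < 2 ∑ K(xⱼ)`, and
since `ĝ = (nσ²)⁻¹ ∑ K'` and `f̂ = (nσ)⁻¹ ∑ K` differ by the extra factor `1/σ`, this is
`|ĝ| < (2/σ) f̂`.
-/

noncomputable def logisticKernel (x : ℝ) : ℝ := 2 / (exp x + exp (-x)) ^ 2

lemma logisticKernel_eq_inv_cosh_sq : logisticKernel = fun x => (2 * cosh x ^ 2)⁻¹ := by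
  ext x; rw [logisticKernel, cosh_eq]; field_simp

lemma logisticKernel_pos (x : ℝ) : 0 < logisticKernel x := by
  unfold logisticKernel; positivity

lemma hasDerivAt_logisticKernel (x : ℝ) :
    HasDerivAt logisticKernel (-2 * tanh x * logisticKernel x) x := by
  have hc := (cosh_pos x).ne'
  rw [logisticKernel_eq_inv_cosh_sq]
  refine (((hasDerivAt_cosh x).pow 2).const_mul 2).inv (by simp [hc]) |>.congr_deriv ?_
  rw [tanh_eq_sinh_div_cosh]
  simp only [Pi.pow_apply]
  field_simp
  ring

lemma abs_deriv_logisticKernel_lt (x : ℝ) : |deriv logisticKernel x| < 2 * logisticKernel x := by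
  rw [(hasDerivAt_logisticKernel x).deriv, abs_mul, abs_mul, abs_neg, abs_two,
    abs_of_pos (logisticKernel_pos x)]
  have := mul_lt_mul_of_pos_right (abs_tanh_lt_one x) (logisticKernel_pos x)
  linarith

lemma Finset.abs_sum_lt_mul_sum {ι : Type*} {s : Finset ι} (hs : s.Nonempty) {f g : ι → ℝ}
    {c : ℝ} (h : ∀ i ∈ s, |f i| < c * g i) : |∑ i ∈ s, f i| < c * ∑ i ∈ s, g i :=
  calc |∑ i ∈ s, f i| ≤ ∑ i ∈ s, |f i| := abs_sum_le_sum_abs f s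
    _ < ∑ i ∈ s, c * g i := sum_lt_sum_of_nonempty hs h
    _ = c * ∑ i ∈ s, g i := (mul_sum s g c).symm

lemma hasDerivAt_sum_comp_sub_div {ι : Type*} {K : ℝ → ℝ} (hK : Differentiable ℝ K)
    (s : Finset ι) (Z : ι → ℝ) (σ z : ℝ) :
    HasDerivAt (fun y => ∑ j ∈ s, K ((y - Z j) / σ))
      ((∑ j ∈ s, deriv K ((z - Z j) / σ)) / σ) z := by
  rw [sum_div]
  refine HasDerivAt.fun_sum fun j _ => ?_
  have hin : HasDerivAt (fun y => (y - Z j) / σ) (1 / σ) z := by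
    simpa using ((hasDerivAt_id z).sub_const (Z j)).div_const σ
  rw [div_eq_mul_one_div]
  exact (hK _).hasDerivAt.comp z hin

/-- With the logistic kernel `K(x) = 2/(eˣ + e⁻ˣ)²`, the kernel density estimate
`f̂(z) = (nσ)⁻¹ ∑ K((z - Zⱼ)/σ)` is positive and differentiable with derivative
`ĝ(z) = (nσ²)⁻¹ ∑ K'((z - Zⱼ)/σ)`, with `|ĝ(z)/f̂(z)| < 2/σ` for all `z`; consequently the
estimated empirical Bayes rule `δ̂(z) = z + ĝ(z)/f̂(z)` satisfies `|δ̂(z) - z| < 2/σ`. -/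
theorem kde_logistic_ratio_bound
    (K : ℝ → ℝ)
    (hK : ∀ x, K x = 2 / (Real.exp x + Real.exp (-x)) ^ 2)
    (n : ℕ) (hn : 1 ≤ n) (σ : ℝ) (hσ : 0 < σ) (Z : ℕ → ℝ)
    (fhat ghat δhat : ℝ → ℝ)
    (hfhat : ∀ z, fhat z = (1 / (n * σ)) * ∑ j ∈ Finset.range n, K ((z - Z j) / σ))
    (hghat : ∀ z, ghat z = (1 / (n * σ ^ 2)) * ∑ j ∈ Finset.range n, deriv K ((z - Z j) / σ))
    (hδhat : ∀ z, δhat z = z + ghat z / fhat z) :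
    (∀ z : ℝ, 0 < fhat z) ∧
    (∀ z : ℝ, HasDerivAt fhat (ghat z) z) ∧
    (∀ z : ℝ, |ghat z / fhat z| < 2 / σ) ∧
    (∀ z : ℝ, |δhat z - z| < 2 / σ) := by
  obtain rfl : K = logisticKernel := funext hK
  have hs : (range n).Nonempty := nonempty_range_iff.mpr (by omega)
  have hfpos (z : ℝ) : 0 < fhat z := by
    rw [hfhat]
    exact mul_pos (by positivity) (sum_pos (fun j _ => logisticKernel_pos _) hs)
  have hg (z : ℝ) : |ghat z| < 2 / σ * fhat z := by
    have hsum := abs_sum_lt_mul_sum hs fun j _ => abs_deriv_logisticKernel_lt ((z - Z j) / σ)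
    rw [hghat, hfhat, abs_mul, abs_of_pos (by positivity)]
    calc _ < 1 / (n * σ ^ 2) * (2 * ∑ j ∈ range n, logisticKernel ((z - Z j) / σ)) := by gcongr
      _ = _ := by field_simp
  have hratio (z : ℝ) : |ghat z / fhat z| < 2 / σ := by
    rw [abs_div, abs_of_pos (hfpos z), div_lt_iff₀ (hfpos z)]
    exact hg z
  refine ⟨hfpos, fun z => ?_, hratio, fun z => by simpa [hδhat] using hratio z⟩
  have hK' : Differentiable ℝ logisticKernel :=
    fun x => (hasDerivAt_logisticKernel x).differentiableAt
  rw [funext hfhat, hghat]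
  refine (hasDerivAt_sum_comp_sub_div hK' (range n) Z σ z).const_mul (1 / (n * σ))
    |>.congr_deriv ?_
  ring
end
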